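/- Let R = ℂ[[h]] be the ring of formal power series over ℂ, M = R² the free R-module with basis e₁,e₂, and λ_h, λ'_h ∈ R. Let ·ₕ and ·ₕ' be the R-bilinear operations A_h^{λ_h,0} and A_h^{λ'_h,0} on M (so e₁·ₕe₁ = λ_h e₁, e₁·ₕe₂ = (λ_h+h)e₂, e₂·ₕe₁ = λ_h e₂, e₂·ₕe₂ = 0, and similarly for ·ₕ' with λ'_h). Then A_h^{λ_h,0} and A_h^{λ'_h,0} are equivalent — i.e. there exists an R-linear automorphism f of M with f(x) − x ∈ hM for all x ∈ M and f(x·ₕy) = f(x)·ₕ'f(y) for all x,y ∈ M — if and only if λ_h = λ'_h. -/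

import Mathlib

/-!
Any bilinear map with the given values on `e₁, e₂` is the product `novikovMul lam X` written out
in coordinates, so for `lam = lam'` the identity is an equivalence. Conversely, write
`f e₁ = (p, q)` and `f e₂ = (r, s)`; since `f ≡ id mod h`, `p` and `s` have constant term `1`.
Comparing `f (e₁ e₁)` and `f (e₁ e₂)` with the products of the images gives
`lam p = lam' p²`, `(lam + h) r = lam' p r` and `(lam + h) s = (lam' + h) p s + lam' q r`,
whence `lam = lam' p`, then `h r = 0`, then `h s (1 - p) = 0`, and so `p = 1` and `lam = lam'`.
-/

lemma PowerSeries.constantCoeff_apply_eq_of_sub_eq_X_smul {ι K : Type*} [Ring K]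
    {x y m : ι → PowerSeries K} (h : y - x = (PowerSeries.X : PowerSeries K) • m) (i : ι) :
    PowerSeries.constantCoeff (y i) = PowerSeries.constantCoeff (x i) := by
  simpa [sub_eq_zero] using congrArg PowerSeries.constantCoeff (congrFun h i)

section NovikovProduct

variable {R : Type*} [CommRing R]

/-- The product `A^{lam,0}` of the paper in coordinates, with `h` generalised to `t`. -/
def novikovMul (lam t : R) : (Fin 2 → R) →ₗ[R] (Fin 2 → R) →ₗ[R] (Fin 2 → R) :=
  LinearMap.mk₂ R
    (fun x y => ![lam * (x 0 * y 0), (lam + t) * (x 0 * y 1) + lam * (x 1 * y 0)])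
    (fun _ _ _ => by ext i; fin_cases i <;> simp <;> ring)
    (fun _ _ _ => by ext i; fin_cases i <;> simp <;> ring)
    (fun _ _ _ => by ext i; fin_cases i <;> simp <;> ring)
    (fun _ _ _ => by ext i; fin_cases i <;> simp <;> ring)

@[simp]
lemma novikovMul_apply_zero (lam t : R) (x y : Fin 2 → R) :
    novikovMul lam t x y 0 = lam * (x 0 * y 0) := rfl

@[simp]
lemma novikovMul_apply_one (lam t : R) (x y : Fin 2 → R) :
    novikovMul lam t x y 1 = (lam + t) * (x 0 * y 1) + lam * (x 1 * y 0) := rfl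

lemma eq_novikovMul_of_basis {lam t : R}
    {mul : (Fin 2 → R) →ₗ[R] (Fin 2 → R) →ₗ[R] (Fin 2 → R)}
    (h11 : mul ![1, 0] ![1, 0] = lam • ![1, 0])
    (h12 : mul ![1, 0] ![0, 1] = (lam + t) • ![0, 1])
    (h21 : mul ![0, 1] ![1, 0] = lam • ![0, 1])
    (h22 : mul ![0, 1] ![0, 1] = 0) :
    mul = novikovMul lam t := by
  have single_zero : Pi.single (0 : Fin 2) (1 : R) = ![1, 0] := by
    ext i; fin_cases i <;> simp
  have single_one : Pi.single (1 : Fin 2) (1 : R) = ![0, 1] := by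
    ext i; fin_cases i <;> simp
  refine (Pi.basisFun R (Fin 2)).ext fun i => (Pi.basisFun R (Fin 2)).ext fun j => ?_
  fin_cases i <;> fin_cases j <;> ext k <;> fin_cases k <;>
    simp [single_zero, single_one, h11, h12, h21, h22]

lemma eq_of_intertwines_novikovMul {lam lam' t : R} [IsDomain R] (ht : t ≠ 0)
    (f : (Fin 2 → R) →ₗ[R] (Fin 2 → R)) (hp : f ![1, 0] 0 ≠ 0) (hs : f ![0, 1] 1 ≠ 0)
    (hf : ∀ x y, f (novikovMul lam t x y) = novikovMul lam' t (f x) (f y)) :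
    lam = lam' := by
  set p := f ![1, 0] 0
  set q := f ![1, 0] 1
  set r := f ![0, 1] 0
  set s := f ![0, 1] 1
  have mul_e₁_e₁ : novikovMul lam t ![1, 0] ![1, 0] = lam • ![1, 0] := by
    ext i; fin_cases i <;> simp
  have mul_e₁_e₂ : novikovMul lam t ![1, 0] ![0, 1] = (lam + t) • ![0, 1] := by
    ext i; fin_cases i <;> simp
  have hf₁₁ := hf ![1, 0] ![1, 0]
  have hf₁₂ := hf ![1, 0] ![0, 1]
  rw [mul_e₁_e₁, map_smul] at hf₁₁
  rw [mul_e₁_e₂, map_smul] at hf₁₂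
  have h11 : lam * p = lam' * (p * p) := by simpa using congrFun hf₁₁ 0
  have h12₀ : (lam + t) * r = lam' * (p * r) := by simpa using congrFun hf₁₂ 0
  have h12₁ : (lam + t) * s = (lam' + t) * (p * s) + lam' * (q * r) := by
    simpa using congrFun hf₁₂ 1
  have hlam : lam = lam' * p := mul_right_cancel₀ hp (by linear_combination h11)
  have hr : r = 0 := by
    have : t * r = 0 := by linear_combination h12₀ - r * hlam
    exact (mul_eq_zero.mp this).resolve_left ht
  have hp1 : p = 1 := by
    have : t * s * (1 - p) = 0 := by linear_combination h12₁ - s * hlam + lam' * q * hr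
    have := (mul_eq_zero.mp this).resolve_left (mul_ne_zero ht hs)
    linear_combination -this
  rw [hlam, hp1, mul_one]

end NovikovProduct

/-- Two Novikov products A_h^{λ_h,0} and A_h^{λ'_h,0} on M = ℂ[[h]]² are
equivalent (via an R-linear automorphism f with f ≡ id mod h intertwining the products)
if and only if λ_h = λ'_h. -/
theorem stmt_19 (lam lam' : PowerSeries ℂ)
    (mul mul' : (Fin 2 → PowerSeries ℂ) →ₗ[PowerSeries ℂ]
        (Fin 2 → PowerSeries ℂ) →ₗ[PowerSeries ℂ] (Fin 2 → PowerSeries ℂ))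
    (e₁ e₂ : Fin 2 → PowerSeries ℂ) (he₁ : e₁ = ![1, 0]) (he₂ : e₂ = ![0, 1])
    (h11 : mul e₁ e₁ = lam • e₁)
    (h12 : mul e₁ e₂ = (lam + PowerSeries.X) • e₂)
    (h21 : mul e₂ e₁ = lam • e₂)
    (h22 : mul e₂ e₂ = 0)
    (h11' : mul' e₁ e₁ = lam' • e₁)
    (h12' : mul' e₁ e₂ = (lam' + PowerSeries.X) • e₂)
    (h21' : mul' e₂ e₁ = lam' • e₂)
    (h22' : mul' e₂ e₂ = 0) :
    (∃ f : (Fin 2 → PowerSeries ℂ) ≃ₗ[PowerSeries ℂ] (Fin 2 → PowerSeries ℂ),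
        (∀ x : Fin 2 → PowerSeries ℂ,
          ∃ m : Fin 2 → PowerSeries ℂ, f x - x = (PowerSeries.X : PowerSeries ℂ) • m) ∧
        (∀ x y : Fin 2 → PowerSeries ℂ, f (mul x y) = mul' (f x) (f y))) ↔
    lam = lam' := by
  subst he₁ he₂
  obtain rfl := eq_novikovMul_of_basis h11 h12 h21 h22
  obtain rfl := eq_novikovMul_of_basis h11' h12' h21' h22'
  constructor
  · rintro ⟨f, hf_id, hf_mul⟩
    have apply_ne_zero (x : Fin 2 → PowerSeries ℂ) (i : Fin 2)
        (hx : PowerSeries.constantCoeff (x i) ≠ 0) : f x i ≠ 0 := fun h => hx <| by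
      obtain ⟨_, hm⟩ := hf_id x
      rw [← PowerSeries.constantCoeff_apply_eq_of_sub_eq_X_smul hm, h, map_zero]
    exact eq_of_intertwines_novikovMul PowerSeries.X_ne_zero (f : _ →ₗ[PowerSeries ℂ] _)
      (apply_ne_zero ![1, 0] 0 (by simp)) (apply_ne_zero ![0, 1] 1 (by simp)) hf_mul
  · rintro rfl
    exact ⟨LinearEquiv.refl _ _, fun _ => ⟨0, by simp⟩, fun _ _ => rfl⟩
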